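/- Let w₁, …, w_d ∈ ℂ^{3KN} be linearly independent vectors lying in the kernel of the block matrix H̄ of equation (32) (with zero diagonal blocks and channel blocks off-diagonal). Write each w_k as a concatenation of 3K blocks w_k^{[ij]} ∈ ℂ^N. Then for each base station i, the 2K·d interference vectors {H_i^{[kj]} w_m^{[kj]} : k ≠ i, j ∈ Fin K, m ∈ Fin d} satisfy: for each m, Σ_{j} H_i^{[k₁ j]} w_m^{[k₁ j]} + Σ_j H_i^{[k₂ j]} w_m^{[k₂ j]} = 0 where k₁, k₂ are the two cells other than i; hence these 2K·d vectors span a subspace of ℂ^M of dimension at most (2K−1)·d. -/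
import Mathlib

theorem block_kernel_interference_alignment (M N K d : ℕ)
    (H : Fin 3 → Fin 3 → Fin K → Matrix (Fin M) (Fin N) ℂ)
    (w : Fin d → Fin 3 → Fin K → (Fin N → ℂ))
    (Hbar : Matrix (Fin 3 × Fin M) (Fin 3 × Fin K × Fin N) ℂ)
    (hHbar : ∀ i a k j b, Hbar (i, a) (k, j, b) = if k = i then 0 else H i k j a b)
    (hindep : LinearIndependent ℂ (fun m => fun p : Fin 3 × Fin K × Fin N => w m p.1 p.2.1 p.2.2))
    (hker : ∀ m, Hbar.mulVec (fun p : Fin 3 × Fin K × Fin N => w m p.1 p.2.1 p.2.2) = 0) :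
    ∀ i : Fin 3,
      (∀ m, ∑ k ∈ Finset.univ.filter (· ≠ i), ∑ j, (H i k j).mulVec (w m k j) = 0) ∧
      Module.finrank ℂ (Submodule.span ℂ
        {x : Fin M → ℂ | ∃ k j m, k ≠ i ∧ x = (H i k j).mulVec (w m k j)}) ≤ (2 * K - 1) * d := by
  intro i
  have part1 : ∀ m, ∑ k ∈ Finset.univ.filter (· ≠ i), ∑ j, (H i k j).mulVec (w m k j) = 0 := by
    intro m
    funext a
    have h0 := congrFun (hker m) (i, a)
    simp only [Matrix.mulVec, dotProduct, Pi.zero_apply] at h0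
    rw [Fintype.sum_prod_type] at h0
    have heq : ∀ k ∈ (Finset.univ : Finset (Fin 3)),
        ∑ q : Fin K × Fin N, Hbar (i, a) (k, q.1, q.2) * w m k q.1 q.2
          = if k = i then 0 else ∑ j, ∑ b, H i k j a b * w m k j b := by
      intro k _
      by_cases hk : k = i
      · simp [hk, hHbar]
      · simp only [hk, if_false, Fintype.sum_prod_type]
        refine Finset.sum_congr rfl fun j _ => Finset.sum_congr rfl fun b _ => ?_
        rw [hHbar]; simp [hk]
    rw [Finset.sum_congr rfl heq] at h0
    simp only [Finset.sum_apply, Matrix.mulVec, dotProduct, Pi.zero_apply]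
    rw [Finset.sum_filter]
    refine Eq.trans (Finset.sum_congr rfl (fun k _ => ?_)) h0
    by_cases hk : k = i <;> simp [hk]
  refine ⟨part1, ?_⟩
  rcases Nat.eq_zero_or_pos K with hK | hK
  · subst hK
    have he : {x : Fin M → ℂ | ∃ k j m, k ≠ i ∧ x = (H i k j).mulVec (w m k j)} = ∅ := by
      ext x
      simp only [Set.mem_setOf_eq, Set.mem_empty_iff_false, iff_false]
      rintro ⟨k, j, -⟩
      exact j.elim0
    rw [he, Submodule.span_empty, finrank_bot]
    exact Nat.zero_le _
  · have hk₀ : ∀ z : Fin 3, z + 1 ≠ z := by decide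
    set q₀ : Fin 3 × Fin K := (i + 1, ⟨0, hK⟩) with hq₀def
    set t : Finset (Fin 3 × Fin K) :=
      (Finset.univ.filter (· ≠ i)) ×ˢ (Finset.univ : Finset (Fin K)) with htdef
    set g : Fin d → Fin 3 × Fin K → (Fin M → ℂ) :=
      fun m p => (H i p.1 p.2).mulVec (w m p.1 p.2) with hgdef
    have hq₀t : q₀ ∈ t := by
      simp [htdef, hq₀def, hk₀ i]
    have hsum : ∀ m, ∑ p ∈ t, g m p = 0 := by
      intro m
      rw [htdef, Finset.sum_product]
      exact part1 m
    have hrep : ∀ m, g m q₀ = -∑ p ∈ t.erase q₀, g m p := by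
      intro m
      have h1 := Finset.add_sum_erase t (g m) hq₀t
      rw [hsum m] at h1
      exact eq_neg_of_add_eq_zero_left h1
    set T : Finset (Fin M → ℂ) :=
      ((t.erase q₀) ×ˢ (Finset.univ : Finset (Fin d))).image (fun x => g x.2 x.1) with hTdef
    have hmemT : ∀ (p : Fin 3 × Fin K) (m : Fin d), p ∈ t.erase q₀ → g m p ∈ (T : Set (Fin M → ℂ)) := by
      intro p m hp
      simp only [hTdef, Finset.coe_image, Set.mem_image, Finset.mem_coe, Finset.mem_product]
      exact ⟨(p, m), ⟨hp, Finset.mem_univ m⟩, rfl⟩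
    have hspan : Submodule.span ℂ
        {x : Fin M → ℂ | ∃ k j m, k ≠ i ∧ x = (H i k j).mulVec (w m k j)}
        ≤ Submodule.span ℂ (T : Set (Fin M → ℂ)) := by
      rw [Submodule.span_le]
      rintro x ⟨k, j, m, hk, rfl⟩
      by_cases hq : (k, j) = q₀
      · have : (H i k j).mulVec (w m k j) = g m q₀ := by rw [← hq]
        rw [this, hrep m]
        exact Submodule.neg_mem _ (Submodule.sum_mem _ fun p hp =>
          Submodule.subset_span (hmemT p m hp))
      · refine Submodule.subset_span (hmemT (k, j) m ?_)
        rw [Finset.mem_erase]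
        exact ⟨hq, by simp [htdef, hk]⟩
    have hcard : t.card = 2 * K := by
      rw [htdef, Finset.card_product, Finset.filter_ne', Finset.card_erase_of_mem (Finset.mem_univ i)]
      simp
    calc Module.finrank ℂ (Submodule.span ℂ
          {x : Fin M → ℂ | ∃ k j m, k ≠ i ∧ x = (H i k j).mulVec (w m k j)})
        ≤ Module.finrank ℂ (Submodule.span ℂ (T : Set (Fin M → ℂ))) :=
          Submodule.finrank_mono hspan
      _ ≤ T.card := finrank_span_finset_le_card T
      _ ≤ ((t.erase q₀) ×ˢ (Finset.univ : Finset (Fin d))).card := Finset.card_image_le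
      _ = (2 * K - 1) * d := by
          rw [Finset.card_product, Finset.card_erase_of_mem hq₀t, hcard]
          simp
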